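/- For every integer n ≥ 1, Σ_{m=1}^{n} (m+n)(2n-m) = (13n³ - n)/6. Consequently, the Ricci curvature of Diff(S^1)/S^1 evaluated on the normalized basis satisfies Ric(L_n/√θ_n, L_{-n}/√θ_n) = -(13n³ - n)/(6 θ_n). -/

import Mathlib

/-! Expanding `(m + a)(2a - m) = 2a² + am - m²`, the sum is `2a²k` plus `a` times a Gauss sum
minus a sum of squares. Taking `a = k = n` gives `2n³ + n²(n+1)/2 - n(n+1)(2n+1)/6 = (13n³ - n)/6`.
In the Ricci expression the `λ`-sums cancel identically. -/

/-- `θ_k = 2hk + (c/12)(k³ - k)` -/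
noncomputable def th (c h : ℝ) (k : ℤ) : ℝ := 2 * h * k + c / 12 * ((k : ℝ) ^ 3 - k)

/-- `λ_{m,n} = (2n+m)θ_m / (2θ_{m+n})` -/
noncomputable def lam (c h : ℝ) (m n : ℤ) : ℝ :=
  (2 * (n : ℝ) + m) * th c h m / (2 * th c h (m + n))

open Finset

theorem sum_Icc_add_mul_two_mul_sub (a : ℝ) (k : ℕ) :
    ∑ m ∈ Icc 1 k, ((m : ℝ) + a) * (2 * a - m) =
      2 * a ^ 2 * k + a * k * (k + 1) / 2 - k * (k + 1) * (2 * k + 1) / 6 := by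
  induction k with
  | zero => simp
  | succ k ih =>
    rw [sum_Icc_succ_top (by omega), ih]
    push_cast
    ring

theorem sum_Icc_add_mul_two_mul_sub_self (n : ℕ) :
    ∑ m ∈ Icc 1 n, ((m : ℝ) + n) * (2 * n - m) = (13 * (n : ℝ) ^ 3 - n) / 6 := by
  rw [sum_Icc_add_mul_two_mul_sub]
  ring

theorem ricci_value_general (c h : ℝ) (n : ℕ)
    (Ric : ℝ)
    (hRic : Ric =
      -(∑ m ∈ Finset.Icc 1 n,
          (((m : ℝ) + n) * (2 * n - m) + 2 * ((m : ℝ) + 2 * n) * lam c h m n)) / th c h n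
        + (∑ m ∈ Finset.Icc 1 n, 2 * ((m : ℝ) + 2 * n) * lam c h m n) / th c h n) :
    (∑ m ∈ Finset.Icc 1 n, ((m : ℝ) + n) * (2 * n - m) = (13 * (n : ℝ) ^ 3 - n) / 6) ∧
    Ric = -(13 * (n : ℝ) ^ 3 - n) / (6 * th c h n) := by
  have hsum := sum_Icc_add_mul_two_mul_sub_self n
  refine ⟨hsum, ?_⟩
  rw [hRic, sum_add_distrib, hsum]
  ring

/-- `Σ_{m=1}^{n} (m+n)(2n-m) = (13n³ - n)/6`; consequently the Ricci curvature of
`Diff(S¹)/S¹`, which after the telescoping cancellation of the `λ`-terms equals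
`-Σ_{m=1}^{n} ((m+n)(2n-m) + 2(m+2n)λ_{m,n})/θ_n + Σ_{m=1}^{n} 2(m+2n)λ_{m,n}/θ_n`,
satisfies `Ric(L_n/√θ_n, L_{-n}/√θ_n) = -(13n³-n)/(6θ_n)`. -/
theorem ricci_value (c h : ℝ) (hc : 0 < c) (hh : 0 < h) (n : ℕ) (hn : 1 ≤ n)
    (Ric : ℝ)
    (hRic : Ric =
      -(∑ m ∈ Finset.Icc 1 n,
          (((m : ℝ) + n) * (2 * n - m) + 2 * ((m : ℝ) + 2 * n) * lam c h m n)) / th c h n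
        + (∑ m ∈ Finset.Icc 1 n, 2 * ((m : ℝ) + 2 * n) * lam c h m n) / th c h n) :
    (∑ m ∈ Finset.Icc 1 n, ((m : ℝ) + n) * (2 * n - m) = (13 * (n : ℝ) ^ 3 - n) / 6) ∧
    Ric = -(13 * (n : ℝ) ^ 3 - n) / (6 * th c h n) :=
  ricci_value_general c h n Ric hRic
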